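/- Define a relation on F_k by u > v if and only if w(v^{-1}u) > 0, where w is the weight function on reduced words. Then > is a strict linear order on F_k invariant under left multiplication: for all f, g, h ∈ F_k, g > h implies fg > fh, and for all distinct g, h exactly one of g > h, h > g holds. -/

import Mathlib

/-!
The positive cone `{g | 0 < W g}` is a subsemigroup. If the reduced words `u`, `v` meet with a
cancelling block `c`, i.e. `u = a c` and `v = c⁻¹ b`, then `w` changes only at the three seams
`a|c`, `c⁻¹|b`, `a|b`: it is additive up to a seam term, and `w (c⁻¹) = -w c`. A finite check on
the three letters meeting there gives `w u + w v ≤ w (reduce (u v)) + 1/2`. Since `w` takes values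
in `ℤ + 1/2` on nonempty words, positive weights are at least `1/2`, so products of positive
elements stay positive. Antisymmetry `W g⁻¹ = -W g` and `W g ≠ 0` for `g ≠ 1` give totality, and
left invariance holds because `(f h)⁻¹ (f g) = h⁻¹ g`.
-/

/-- A letter of the alphabet `Σ_k^±`: `(i, true)` is the positive letter `s_{i+1}`,
`(i, false)` is the negative letter `S_{i+1} = s_{i+1}⁻¹`. -/
abbrev Letter (k : ℕ) := Fin k × Bool

/-- A word is reduced if no two adjacent letters cancel. -/
def Reduced {k : ℕ} (u : List (Letter k)) : Prop :=
  u.Chain' fun x y => y ≠ (x.1, !x.2)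

/-- Contribution of a length-2 factor `xy`:
`+1` if it has the form `s_j S_i` with `j > i`, `-1` if `S_j s_i` with `j > i`, else `0`. -/
def pairVal {k : ℕ} (x y : Letter k) : ℤ :=
  if x.2 = true ∧ y.2 = false ∧ y.1 < x.1 then 1
  else if x.2 = false ∧ y.2 = true ∧ y.1 < x.1 then -1
  else 0

/-- Sum of contributions of all length-2 factors of a word. -/
def pairSum {k : ℕ} : List (Letter k) → ℤ
  | x :: y :: t => pairVal x y + pairSum (y :: t)
  | _ => 0

/-- `+1/2`, `-1/2`, or `0` according to the last letter. -/
def lastSign {k : ℕ} (u : List (Letter k)) : ℚ :=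
  match u.getLast? with
  | none => 0
  | some x => if x.2 then 1/2 else -1/2

/-- The weight function `w` of Šunić's order. -/
def w {k : ℕ} (u : List (Letter k)) : ℚ := pairSum u + lastSign u

/-- The weight transported to the free group via reduced words. -/
def W {k : ℕ} (g : FreeGroup (Fin k)) : ℚ := w g.toWord

namespace FreeGroup

theorem IsReduced.rel_getLast?_head? {α : Type*} {l₁ l₂ : List (α × Bool)}
    (h : IsReduced (l₁ ++ l₂)) {x y : α × Bool} (hx : l₁.getLast? = some x)
    (hy : l₂.head? = some y) : x.1 = y.1 → x.2 = y.2 :=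
  (List.isChain_append.mp h).2.2 x hx y hy

theorem exists_reduce_append_eq {α : Type*} [DecidableEq α] :
    ∀ {u v : List (α × Bool)}, IsReduced u → IsReduced v →
      ∃ a c b, u = a ++ c ∧ v = invRev c ++ b ∧ IsReduced (a ++ b) ∧ reduce (u ++ v) = a ++ b
  | [], v, _, hv => ⟨[], [], v, rfl, rfl, hv, hv.reduce_eq⟩
  | x :: u, v, hu, hv => by
    obtain ⟨a, c, b, rfl, rfl, hab, hred⟩ :=
      exists_reduce_append_eq (u := u) (hu.infix ⟨[x], [], by simp⟩) hv
    have hred' : reduce (x :: (a ++ c) ++ (invRev c ++ b)) = reduce (x :: (a ++ b)) := by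
      rw [List.cons_append, ← reduce_cons_reduce, hred]
    rw [hred']
    rcases a with _ | ⟨y, a⟩
    · rcases b with _ | ⟨y, b⟩
      · exact ⟨[x], c, [], rfl, rfl, .singleton, rfl⟩
      by_cases hxy : x.1 = y.1 → x.2 = y.2
      · have hxb : IsReduced (x :: y :: b) := isReduced_cons_cons.mpr ⟨hxy, hab⟩
        exact ⟨[x], c, y :: b, rfl, rfl, hxb, hxb.reduce_eq⟩
      -- `x` cancels the first letter of `b`, so the cancelling block grows to `x :: c`.
      · obtain ⟨x₁, x₂⟩ := x; obtain ⟨y₁, y₂⟩ := y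
        obtain ⟨rfl, hne⟩ : x₁ = y₁ ∧ x₂ ≠ y₂ := by simpa using hxy
        obtain rfl : y₂ = !x₂ := by cases x₂ <;> cases y₂ <;> simp_all
        have hb : IsReduced b := hab.infix ⟨[(x₁, !x₂)], [], by simp⟩
        refine ⟨[], (x₁, x₂) :: c, b, rfl, by simp [invRev], hb, ?_⟩
        rw [List.nil_append]
        exact (reduce.Step.eq (Red.Step.not (L₁ := []))).trans hb.reduce_eq
    · have hxab : IsReduced (x :: y :: (a ++ b)) :=
        isReduced_cons_cons.mpr ⟨(isReduced_cons_cons.mp hu).1, hab⟩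
      exact ⟨x :: y :: a, c, b, rfl, rfl, hxab, hxab.reduce_eq⟩

end FreeGroup

section Weight

open FreeGroup

variable {k : ℕ}

def halfSign (x : Letter k) : ℚ := if x.2 then 1/2 else -1/2

def junction : Option (Letter k) → Option (Letter k) → ℚ
  | some x, some y => pairVal x y - halfSign x
  | _, _ => 0

@[simp] lemma junction_none_left (o : Option (Letter k)) : junction none o = 0 := by
  cases o <;> rfl

@[simp] lemma junction_none_right (o : Option (Letter k)) : junction o none = 0 := by
  cases o <;> rfl

lemma halfSign_inv (x : Letter k) : halfSign (x.1, !x.2) = -halfSign x := by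
  obtain ⟨_, _ | _⟩ := x <;> norm_num [halfSign]

lemma abs_junction_le (o o' : Option (Letter k)) : |junction o o'| ≤ 1/2 := by
  rcases o with _ | ⟨_, _ | _⟩ <;> rcases o' with _ | _ <;>
    simp [junction, pairVal, halfSign, abs_le] <;> split_ifs <;> norm_num

lemma pairVal_add_pairVal_inv (x y : Letter k) (hxy : x.1 = y.1 → x.2 = y.2) :
    (pairVal x y + pairVal (y.1, !y.2) (x.1, !x.2) : ℚ) = halfSign x - halfSign y := by
  obtain ⟨i, a⟩ := x; obtain ⟨j, b⟩ := y
  cases a <;> cases b <;> simp [pairVal, halfSign] at * <;> split_ifs <;> norm_num <;> order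

lemma junction_add_junction_inv_sub_le (x y z : Letter k) (hxy : x.1 = y.1 → x.2 = y.2)
    (hyz : y.1 = z.1 → (!y.2) = z.2) (hxz : x.1 = z.1 → x.2 = z.2) :
    junction (some x) (some y) + junction (some (y.1, !y.2)) (some z)
      - junction (some x) (some z) ≤ 1/2 := by
  obtain ⟨i, a⟩ := x; obtain ⟨j, b⟩ := y; obtain ⟨l, c⟩ := z
  cases a <;> cases b <;> cases c <;> simp [junction, pairVal, halfSign] at * <;>
    split_ifs <;> norm_num <;> order

@[simp] lemma w_nil : w ([] : List (Letter k)) = 0 := by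
  simp [w, pairSum, lastSign]

lemma w_singleton (x : Letter k) : w [x] = halfSign x := by
  simp [w, pairSum, lastSign, halfSign]

lemma w_cons_cons (x y : Letter k) (t : List (Letter k)) :
    w (x :: y :: t) = pairVal x y + w (y :: t) := by
  simp only [w, pairSum, lastSign, List.getLast?_cons_cons]
  push_cast
  ring

lemma w_append : ∀ A B : List (Letter k), w (A ++ B) = w A + w B + junction A.getLast? B.head?
  | [], B => by simp
  | [x], [] => by simp
  | [x], y :: t => by
    rw [List.singleton_append, w_cons_cons, w_singleton]
    simp only [List.getLast?_singleton, List.head?_cons, junction]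
    ring
  | x :: y :: A, B => by
    rw [List.cons_append, List.cons_append, w_cons_cons, ← List.cons_append, w_append,
      w_cons_cons, List.getLast?_cons_cons]
    ring

lemma getLast?_invRev (u : List (Letter k)) :
    (invRev u).getLast? = u.head?.map fun x => (x.1, !x.2) := by
  rw [invRev, List.getLast?_reverse, List.head?_map]

lemma w_invRev : ∀ {u : List (Letter k)}, IsReduced u → w (invRev u) = -w u
  | [], _ => by simp [invRev]
  | [x], _ => by simp [invRev, w_singleton, halfSign_inv]
  | x :: y :: t, hu => by
    obtain ⟨hxy, hyt⟩ := isReduced_cons_cons.mp hu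
    rw [invRev_cons, w_append, w_invRev hyt, getLast?_invRev, w_cons_cons]
    simp only [invRev, List.map_cons, List.map_nil, List.reverse_singleton, w_singleton,
      List.head?_cons, Option.map_some, junction, halfSign_inv]
    linarith [pairVal_add_pairVal_inv x y hxy]

lemma junction_splice_le {a c b : List (Letter k)} (hac : IsReduced (a ++ c))
    (hcb : IsReduced (invRev c ++ b)) (hab : IsReduced (a ++ b)) :
    junction a.getLast? c.head? + junction (invRev c).getLast? b.head?
      - junction a.getLast? b.head? ≤ 1/2 := by
  rcases c with _ | ⟨y, c⟩
  · simp only [invRev_empty, List.head?_nil, List.getLast?_nil, junction_none_left,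
      junction_none_right]
    linarith [abs_le.mp (abs_junction_le a.getLast? b.head?)]
  have hy : (invRev (y :: c)).getLast? = some (y.1, !y.2) := by simp [getLast?_invRev]
  rw [hy, List.head?_cons]
  rcases ha : a.getLast? with _ | x
  · simpa using (abs_le.mp (abs_junction_le _ _)).2
  rcases hb : b.head? with _ | z
  · simpa using (abs_le.mp (abs_junction_le _ _)).2
  exact junction_add_junction_inv_sub_le x y z (IsReduced.rel_getLast?_head? hac ha rfl)
    (IsReduced.rel_getLast?_head? hcb hy hb) (IsReduced.rel_getLast?_head? hab ha hb)

lemma w_add_w_le_w_reduce_add_half {u v : List (Letter k)} (hu : IsReduced u)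
    (hv : IsReduced v) : w u + w v ≤ w (reduce (u ++ v)) + 1/2 := by
  obtain ⟨a, c, b, rfl, rfl, hab, hred⟩ := exists_reduce_append_eq hu hv
  rw [hred, w_append, w_append, w_append, w_invRev (hu.infix ⟨a, [], by simp⟩)]
  linarith [junction_splice_le hu hv hab]

lemma exists_int_w_eq_add_half {u : List (Letter k)} (hu : u ≠ []) :
    ∃ n : ℤ, w u = n + 1/2 := by
  obtain ⟨x, hx⟩ := Option.ne_none_iff_exists'.mp (mt List.getLast?_eq_none_iff.mp hu)
  have hw : w u = pairSum u + halfSign x := by simp [w, lastSign, hx, halfSign]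
  rcases x with ⟨_, _ | _⟩
  · exact ⟨pairSum u - 1, by rw [hw]; push_cast; norm_num [halfSign]; ring⟩
  · exact ⟨pairSum u, by rw [hw]; norm_num [halfSign]⟩

end Weight

section Order

open FreeGroup

variable {k : ℕ}

lemma W_inv (g : FreeGroup (Fin k)) : W g⁻¹ = -W g := by
  rw [W, W, toWord_inv, w_invRev isReduced_toWord]

lemma W_add_W_le_W_mul_add_half (g h : FreeGroup (Fin k)) : W g + W h ≤ W (g * h) + 1/2 := by
  rw [W, W, W, toWord_mul]
  exact w_add_w_le_w_reduce_add_half isReduced_toWord isReduced_toWord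

lemma exists_int_W_eq_add_half {g : FreeGroup (Fin k)} (hg : g ≠ 1) :
    ∃ n : ℤ, W g = n + 1/2 :=
  exists_int_w_eq_add_half (mt toWord_eq_nil_iff.mp hg)

lemma W_ne_zero {g : FreeGroup (Fin k)} (hg : g ≠ 1) : W g ≠ 0 := by
  obtain ⟨n, hn⟩ := exists_int_W_eq_add_half hg
  rw [hn]
  intro h
  have : 2 * n + 1 = 0 := by exact_mod_cast (by linarith : (2 * n + 1 : ℚ) = 0)
  omega

lemma half_le_W_of_pos {g : FreeGroup (Fin k)} (hg : 0 < W g) : 1/2 ≤ W g := by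
  obtain ⟨n, hn⟩ := exists_int_W_eq_add_half (g := g) (by rintro rfl; simp [W] at hg)
  rw [hn] at hg ⊢
  have : (-1 : ℤ) < n := by exact_mod_cast (by linarith : (-1 : ℚ) < n)
  have : (0 : ℚ) ≤ n := by exact_mod_cast (by omega : (0 : ℤ) ≤ n)
  linarith

lemma W_mul_pos {g h : FreeGroup (Fin k)} (hg : 0 < W g) (hh : 0 < W h) : 0 < W (g * h) := by
  linarith [W_add_W_le_W_mul_add_half g h, half_le_W_of_pos hg, half_le_W_of_pos hh]

lemma xor_W_pos_W_inv_pos {g : FreeGroup (Fin k)} (hg : g ≠ 1) : Xor' (0 < W g) (0 < W g⁻¹) := by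
  rw [W_inv]
  rcases (W_ne_zero hg).lt_or_gt with hneg | hpos
  · exact Or.inr ⟨by linarith, by linarith⟩
  · exact Or.inl ⟨hpos, by linarith⟩

end Order

theorem stmt13_general (k : ℕ) :
    (∀ f g h : FreeGroup (Fin k), 0 < W (h⁻¹ * g) → 0 < W ((f * h)⁻¹ * (f * g))) ∧
    (∀ f g h : FreeGroup (Fin k),
      0 < W (g⁻¹ * f) → 0 < W (h⁻¹ * g) → 0 < W (h⁻¹ * f)) ∧
    (∀ g h : FreeGroup (Fin k), g ≠ h →
      Xor' (0 < W (h⁻¹ * g)) (0 < W (g⁻¹ * h))) := by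
  refine ⟨fun f g h hgh => ?_, fun f g h hfg hgh => ?_, fun g h hne => ?_⟩
  · rwa [mul_inv_rev, mul_assoc, inv_mul_cancel_left]
  · simpa [mul_assoc] using W_mul_pos hgh hfg
  · simpa using xor_W_pos_W_inv_pos (g := h⁻¹ * g) (mt inv_mul_eq_one.mp hne.symm)

/-- `u > v ⇔ W (v⁻¹ u) > 0` is a left-invariant strict linear order
on `F_k`. -/
theorem stmt13 (k : ℕ) (hk : 2 ≤ k) :
    (∀ f g h : FreeGroup (Fin k), 0 < W (h⁻¹ * g) → 0 < W ((f * h)⁻¹ * (f * g))) ∧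
    (∀ f g h : FreeGroup (Fin k),
      0 < W (g⁻¹ * f) → 0 < W (h⁻¹ * g) → 0 < W (h⁻¹ * f)) ∧
    (∀ g h : FreeGroup (Fin k), g ≠ h →
      Xor' (0 < W (h⁻¹ * g)) (0 < W (g⁻¹ * h))) :=
  stmt13_general k
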